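/- Let (X, 𝒜) be a measurable space, let 𝒴 = {−1, 1}, let D be a probability measure on X × 𝒴, and let F be a nonempty countable set of measurable functions f : X → [−1, 1]. Let ℓ : [−1,1] × 𝒴 → [0,1] be γ-Lipschitz in its first argument for every fixed label. Suppose there is a measurable coloring κ : X → {1,…,p} such that every f ∈ F is constant on the fibers of κ (f(x) = f(x') whenever κ(x) = κ(x')). Then for every δ > 0, with probability at least 1 − δ over an i.i.d. sample S = ((x_1,y_1),…,(x_m,y_m)) drawn from D^m, every f ∈ F satisfies L(f) ≤ L_S(f) + 2γ·√(p/m) + 3√(ln(2/δ)/(2m)), where L_S(f) = (1/m) Σ_{i=1}^m ℓ(f(x_i), y_i) and L(f) = E_{(x,y)∼D}[ℓ(f(x), y)]. -/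

import Mathlib

open Finset MeasureTheory

/-! The losses `(x, y) ↦ ℓ (f x) y`, `f ∈ F`, are constant on the `2p` cells `κ⁻¹{c} × {y}`, so
the gap `L(f) - L_S(f)` is `∑ₑ Δₑ Hₑ`, where `Δₑ` is the true minus the empirical mass of the
cell `e` and `Hₑ ∈ [0, 1]` is the loss on it. By Hoeffding's inequality and a union bound over
the `4^p` unions of cells, with probability at least `1 - δ` (an event that does not involve `f`)
every union `A` has `∑_{e ∈ A} Δₑ ≤ τ`, whence `∑ₑ |Δₑ| ≤ 2τ`, and both label classes have
`∑ Δₑ ≤ t`. Since `Hₑ` is within `min γ 1` of `ℓ 0 yₑ`, which depends on the label only,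
`∑ₑ Δₑ Hₑ ≤ 2 (min γ 1) τ + t`, and `τ`, `t` are chosen to make this at most
`2γ √(p/m) + 3 √(log(2/δ)/(2m))`. -/

open ProbabilityTheory Real

section Deviation

variable {Ω E : Type*}

open Classical in
noncomputable def empiricalFreq {m : ℕ} (S : Fin m → Ω) (B : Set Ω) : ℝ :=
  #{i | S i ∈ B} / m

noncomputable def cellDeviation [MeasurableSpace Ω] (μ : Measure Ω) (Φ : Ω → E) {m : ℕ}
    (S : Fin m → Ω) (e : E) : ℝ :=
  μ.real (Φ ⁻¹' {e}) - empiricalFreq S (Φ ⁻¹' {e})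

lemma sum_empiricalFreq_preimage_singleton {m : ℕ} (S : Fin m → Ω) (Φ : Ω → E)
    (A : Finset E) :
    ∑ e ∈ A, empiricalFreq S (Φ ⁻¹' {e}) = empiricalFreq S (Φ ⁻¹' A) := by
  classical
  simp only [empiricalFreq, ← sum_div, card_filter, Set.mem_preimage, Set.mem_singleton_iff,
    Finset.mem_coe]
  push_cast
  rw [sum_comm]
  simp

variable [MeasurableSpace Ω]

lemma hasSubgaussianMGF_measureReal_sub_indicator (μ : Measure Ω) [IsProbabilityMeasure μ]
    {B : Set Ω} (hB : MeasurableSet B) :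
    HasSubgaussianMGF (fun ω => μ.real B - B.indicator 1 ω) (1 / 4) μ := by
  have hmeas : AEMeasurable (fun ω => -B.indicator (1 : Ω → ℝ) ω) μ :=
    (measurable_one.indicator hB).neg.aemeasurable
  have h := hasSubgaussianMGF_of_mem_Icc (a := -1) (b := 0) hmeas
    (ae_of_all _ fun ω => by by_cases h : ω ∈ B <;> simp [h])
  have hc : ((‖(0 : ℝ) - -1‖₊ / 2) ^ 2 : NNReal) = 1 / 4 := by norm_num
  rw [hc, integral_neg, integral_indicator_one hB] at h
  convert h using 2 with ω
  ring

lemma measureReal_le_sub_empiricalFreq_le (μ : Measure Ω) [IsProbabilityMeasure μ]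
    {B : Set Ω} (hB : MeasurableSet B) (m : ℕ) {t : ℝ} (ht : 0 ≤ t) :
    (Measure.pi fun _ : Fin m => μ).real {S | t ≤ μ.real B - empiricalFreq S B} ≤
      exp (-2 * m * t ^ 2) := by
  classical
  rcases Nat.eq_zero_or_pos m with rfl | hm
  · simp
  set X : Fin m → (Fin m → Ω) → ℝ := fun i S => μ.real B - B.indicator 1 (S i)
  have hX : ∀ i ∈ (univ : Finset (Fin m)),
      HasSubgaussianMGF (X i) (1 / 4) (Measure.pi fun _ => μ) :=
    fun i _ => HasSubgaussianMGF.of_map (Y := Function.eval i)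
      (X := fun ω : Ω => μ.real B - B.indicator (1 : Ω → ℝ) ω) (measurable_pi_apply i).aemeasurable
      (by rw [(measurePreserving_eval (fun _ : Fin m => μ) i).map_eq]
          exact hasSubgaussianMGF_measureReal_sub_indicator μ hB)
  have hindep : iIndepFun X (Measure.pi fun _ => μ) :=
    iIndepFun_pi (X := fun _ ω => μ.real B - B.indicator 1 ω)
      fun _ => (measurable_const.sub (measurable_one.indicator hB)).aemeasurable
  have hsum : ∀ S : Fin m → Ω, ∑ i, X i S = m * (μ.real B - empiricalFreq S B) := by
    intro S
    simp only [X, sum_sub_distrib, empiricalFreq, sum_const, card_univ, Fintype.card_fin,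
      nsmul_eq_mul, Set.indicator_apply, Pi.one_apply, sum_boole]
    field_simp
  calc (Measure.pi fun _ : Fin m => μ).real {S | t ≤ μ.real B - empiricalFreq S B}
      = (Measure.pi fun _ : Fin m => μ).real {S | m * t ≤ ∑ i ∈ univ, X i S} := by
        congr 1; ext S
        simp only [Set.mem_ofPred_eq, hsum, mul_le_mul_iff_right₀ (Nat.cast_pos.2 hm)]
    _ ≤ exp (-(m * t) ^ 2 / (2 * ∑ _i : Fin m, (1 / 4 : NNReal))) :=
        HasSubgaussianMGF.measure_sum_ge_le_of_iIndepFun hindep hX (by positivity)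
    _ = exp (-2 * m * t ^ 2) := by
        congr 1
        simp only [sum_const, card_univ, Fintype.card_fin, nsmul_eq_mul]
        push_cast
        field_simp
        ring

variable [MeasurableSpace E] [MeasurableSingletonClass E]

lemma sum_cellDeviation {μ : Measure Ω} [IsFiniteMeasure μ] {Φ : Ω → E} (hΦ : Measurable Φ)
    {m : ℕ} (S : Fin m → Ω) (A : Finset E) :
    ∑ e ∈ A, cellDeviation μ Φ S e = μ.real (Φ ⁻¹' A) - empiricalFreq S (Φ ⁻¹' A) := by
  simp only [cellDeviation, sum_sub_distrib, sum_empiricalFreq_preimage_singleton,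
    sum_measureReal_preimage_singleton (μ := μ) A fun e _ => hΦ (measurableSet_singleton e)]

lemma measureReal_exists_lt_sum_cellDeviation_le (μ : Measure Ω) [IsProbabilityMeasure μ]
    {Φ : Ω → E} (hΦ : Measurable Φ) {ι : Type*} [Fintype ι] (A : ι → Finset E) (m : ℕ)
    {t : ℝ} (ht : 0 ≤ t) :
    (Measure.pi fun _ : Fin m => μ).real {S | ∃ j, t < ∑ e ∈ A j, cellDeviation μ Φ S e} ≤
      Fintype.card ι * exp (-2 * m * t ^ 2) := by
  calc (Measure.pi fun _ : Fin m => μ).real {S | ∃ j, t < ∑ e ∈ A j, cellDeviation μ Φ S e}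
      ≤ (Measure.pi fun _ : Fin m => μ).real
          (⋃ j, {S | t ≤ μ.real (Φ ⁻¹' A j) - empiricalFreq S (Φ ⁻¹' A j)}) := by
        refine measureReal_mono fun S ⟨j, hj⟩ => Set.mem_iUnion.2 ⟨j, ?_⟩
        have := sum_cellDeviation (μ := μ) hΦ S (A j)
        simp only [Set.mem_ofPred_eq]
        linarith
    _ ≤ ∑ j, (Measure.pi fun _ : Fin m => μ).real
          {S | t ≤ μ.real (Φ ⁻¹' A j) - empiricalFreq S (Φ ⁻¹' A j)} :=
        measureReal_iUnion_fintype_le _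
    _ ≤ ∑ _j : ι, exp (-2 * m * t ^ 2) :=
        sum_le_sum fun j _ =>
          measureReal_le_sub_empiricalFreq_le μ (hΦ (A j).finite_toSet.measurableSet) m ht
    _ = Fintype.card ι * exp (-2 * m * t ^ 2) := by simp

variable [Fintype E]

lemma sum_cellDeviation_univ {μ : Measure Ω} [IsProbabilityMeasure μ] {Φ : Ω → E}
    (hΦ : Measurable Φ) {m : ℕ} (hm : m ≠ 0) (S : Fin m → Ω) :
    ∑ e, cellDeviation μ Φ S e = 0 := by
  classical
  rw [sum_cellDeviation hΦ, coe_univ, Set.preimage_univ, probReal_univ, empiricalFreq]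
  simp [hm]

lemma integral_sub_average_eq_sum_cellDeviation_mul {μ : Measure Ω} [IsFiniteMeasure μ]
    {Φ : Ω → E} (hΦ : Measurable Φ) (h : E → ℝ) {m : ℕ} (S : Fin m → Ω) :
    ∫ ω, h (Φ ω) ∂μ - 1 / m * ∑ i, h (Φ (S i)) = ∑ e, cellDeviation μ Φ S e * h e := by
  classical
  have hint : ∫ ω, h (Φ ω) ∂μ = ∑ e, μ.real (Φ ⁻¹' {e}) * h e := by
    rw [← integral_map hΦ.aemeasurable (measurable_of_finite h).aestronglyMeasurable,
      integral_fintype Integrable.of_finite]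
    simp only [smul_eq_mul, map_measureReal_apply hΦ (measurableSet_singleton _)]
  have havg : 1 / m * ∑ i, h (Φ (S i)) = ∑ e, empiricalFreq S (Φ ⁻¹' {e}) * h e := by
    rw [← sum_fiberwise univ (fun i => Φ (S i)), mul_sum]
    refine sum_congr rfl fun e _ => ?_
    rw [sum_congr rfl fun i hi => by rw [(mem_filter.1 hi).2], sum_const, nsmul_eq_mul,
      empiricalFreq]
    simp only [Set.mem_preimage, Set.mem_singleton_iff]
    ring
  rw [hint, havg, ← sum_sub_distrib]
  simp only [cellDeviation, sub_mul]

end Deviation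

section SignedDeviation

variable {E : Type*} [Fintype E]

lemma sum_abs_le_two_mul_of_sum_eq_zero {Δ : E → ℝ} (h0 : ∑ e, Δ e = 0) {τ : ℝ}
    (hτ : ∀ A : Finset E, ∑ e ∈ A, Δ e ≤ τ) : ∑ e, |Δ e| ≤ 2 * τ := by
  classical
  have hsplit := sum_filter_add_sum_filter_not univ (fun e => 0 ≤ Δ e) Δ
  have habs := sum_filter_add_sum_filter_not univ (fun e => 0 ≤ Δ e) (fun e => |Δ e|)
  have hpos : ∑ e with 0 ≤ Δ e, |Δ e| = ∑ e with 0 ≤ Δ e, Δ e :=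
    sum_congr rfl fun e he => abs_of_nonneg (mem_filter.1 he).2
  have hneg : ∑ e with ¬0 ≤ Δ e, |Δ e| = -∑ e with ¬0 ≤ Δ e, Δ e := by
    rw [← sum_neg_distrib]
    exact sum_congr rfl fun e he => abs_of_neg (not_le.1 (mem_filter.1 he).2)
  linarith [hτ {e | 0 ≤ Δ e}]

lemma sum_mul_le_of_abs_sub_le (Δ : E → ℝ) {H b : E → ℝ} {c : ℝ}
    (hc : ∀ e, |H e - b e| ≤ c) :
    ∑ e, Δ e * H e ≤ c * ∑ e, |Δ e| + ∑ e, Δ e * b e := by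
  rw [mul_sum, ← sum_add_distrib]
  refine sum_le_sum fun e _ => ?_
  calc Δ e * H e = Δ e * (H e - b e) + Δ e * b e := by ring
    _ ≤ |Δ e| * c + Δ e * b e := by
        refine add_le_add_left ?_ _
        calc Δ e * (H e - b e) ≤ |Δ e * (H e - b e)| := le_abs_self _
          _ = |Δ e| * |H e - b e| := abs_mul _ _
          _ ≤ |Δ e| * c := mul_le_mul_of_nonneg_left (hc e) (abs_nonneg _)
    _ = c * |Δ e| + Δ e * b e := by ring

lemma sum_mul_comp_snd_le {α : Type*} [Fintype α] {Δ : α × Bool → ℝ} (h0 : ∑ e, Δ e = 0)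
    {β : Bool → ℝ} (hβ : ∀ b, β b ∈ Set.Icc (0 : ℝ) 1) {t : ℝ}
    (ht : ∀ b, ∑ e with e.2 = b, Δ e ≤ t) : ∑ e, Δ e * β e.2 ≤ t := by
  have hfib : ∀ g : α × Bool → ℝ, ∑ e, g e = ∑ b, ∑ e with e.2 = b, g e :=
    fun g => (sum_fiberwise univ Prod.snd g).symm
  have hlabel : ∑ e, Δ e * β e.2 = ∑ b, β b * ∑ e with e.2 = b, Δ e := by
    rw [hfib]
    refine sum_congr rfl fun b _ => ?_
    rw [mul_sum]
    exact sum_congr rfl fun e he => by rw [(mem_filter.1 he).2, mul_comm]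
  -- the two label sums cancel, leaving `(β true - β false) * d` with `|d| ≤ t`
  rw [hfib, Fintype.sum_bool] at h0
  rw [hlabel, Fintype.sum_bool]
  have ht₁ := ht true
  have ht₀ := ht false
  obtain ⟨hβ₁, hβ₁'⟩ := hβ true
  obtain ⟨hβ₀, hβ₀'⟩ := hβ false
  rcases le_total 0 (∑ e with e.2 = true, Δ e) with hd | hd <;> nlinarith

end SignedDeviation

lemma four_pow_mul_exp_add_two_mul_exp_le {n : ℕ} (hn : 1 ≤ n) {r : ℝ} (hr : 1 / 2 ≤ r) :
    4 ^ n * exp (-(√(2 * n) + r - 1 / 2) ^ 2) + 2 * exp (-(r + 1) ^ 2) ≤ 2 * exp (-r ^ 2) := by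
  have hlog2 := log_two_lt_d9
  have hsqrt : 1 ≤ √(2 * n) := one_le_sqrt.2 (by norm_cast; omega)
  have hfour : (4 : ℝ) ^ n = exp (n * (2 * log 2)) := by
    rw [exp_nat_mul, ← log_rpow two_pos, exp_log (by positivity)]
    norm_num
  have hlarge : 4 ^ n * exp (-(√(2 * n) + r - 1 / 2) ^ 2) ≤ exp (-r ^ 2) := by
    rw [hfour, ← exp_add, exp_le_exp]
    have hsq : √(2 * n) ^ 2 = 2 * n := sq_sqrt (by positivity)
    have hn' : (1 : ℝ) ≤ n := by exact_mod_cast hn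
    nlinarith [mul_le_mul_of_nonneg_right hsqrt (by linarith : 0 ≤ r - 1 / 2)]
  have hsmall : 2 * exp (-(r + 1) ^ 2) ≤ exp (-r ^ 2) := by
    rw [← exp_log (two_pos : (0 : ℝ) < 2), ← exp_add, exp_le_exp]
    nlinarith
  linarith

lemma half_le_sqrt_log_two_div {δ : ℝ} (hδ : 0 < δ) (hδ1 : δ ≤ 1) : 1 / 2 ≤ √(log (2 / δ)) := by
  have : log 2 ≤ log (2 / δ) := log_le_log two_pos (by rw [le_div_iff₀ hδ]; linarith)
  rw [le_sqrt' (by norm_num)]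
  linarith [log_two_gt_d9]

lemma two_mul_exp_neg_sqrt_log_sq {δ : ℝ} (hδ : 0 < δ) (hδ1 : δ ≤ 1) :
    2 * exp (-√(log (2 / δ)) ^ 2) = δ := by
  rw [sq_sqrt (log_nonneg (by rw [le_div_iff₀ hδ]; linarith)), exp_neg, exp_log (by positivity)]
  field_simp

lemma neg_two_mul_mul_div_sqrt_sq {m : ℕ} (hm : m ≠ 0) (a : ℝ) :
    -2 * m * (a / √(2 * m)) ^ 2 = -a ^ 2 := by
  rw [div_pow, sq_sqrt (by positivity)]
  field_simp

lemma ofReal_one_sub_le_of_measureReal_compl_le {Ω : Type*} [MeasurableSpace Ω] {μ : Measure Ω}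
    [IsProbabilityMeasure μ] {s : Set Ω} {δ : ℝ} (h : μ.real sᶜ ≤ δ) :
    ENNReal.ofReal (1 - δ) ≤ μ s := by
  refine ENNReal.ofReal_le_of_le_toReal ?_
  have := measureReal_union_le (μ := μ) s sᶜ
  rw [Set.union_compl_self, probReal_univ] at this
  rw [← measureReal_def]
  linarith

lemma two_mul_min_mul_add_le (γ : ℝ) (p m : ℕ) {r : ℝ} (hr : 1 / 2 ≤ r) :
    2 * min γ 1 * ((√(2 * p) + r - 1 / 2) / √(2 * m)) + (r + 1) / √(2 * m) ≤
      2 * γ * √(p / m) + 3 * (r / √(2 * m)) := by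
  have hpm : √(p / m) = √(2 * p) / √(2 * m) := by
    rw [← sqrt_div' _ (by positivity), mul_div_mul_left _ _ two_ne_zero]
  have hnum : 2 * min γ 1 * (√(2 * p) + r - 1 / 2) + (r + 1) ≤ 2 * γ * √(2 * p) + 3 * r := by
    nlinarith [min_le_left γ 1, min_le_right γ 1, sqrt_nonneg (2 * p)]
  calc 2 * min γ 1 * ((√(2 * p) + r - 1 / 2) / √(2 * m)) + (r + 1) / √(2 * m)
      = (2 * min γ 1 * (√(2 * p) + r - 1 / 2) + (r + 1)) / √(2 * m) := by ring
    _ ≤ (2 * γ * √(2 * p) + 3 * r) / √(2 * m) := div_le_div_of_nonneg_right hnum (sqrt_nonneg _)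
    _ = 2 * γ * √(p / m) + 3 * (r / √(2 * m)) := by rw [hpm]; ring

section RepresentativeSample

variable {Ω α : Type*} [MeasurableSpace Ω] [Fintype α]

def IsRepresentativeSample (μ : Measure Ω) (Φ : Ω → α × Bool) (τ t : ℝ) {m : ℕ}
    (S : Fin m → Ω) : Prop :=
  (∀ A : Finset (α × Bool), ∑ e ∈ A, cellDeviation μ Φ S e ≤ τ) ∧
    ∀ b : Bool, ∑ e with e.2 = b, cellDeviation μ Φ S e ≤ t

variable [MeasurableSpace α] [MeasurableSingletonClass α]

lemma measureReal_not_isRepresentativeSample_le (μ : Measure Ω) [IsProbabilityMeasure μ]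
    {Φ : Ω → α × Bool} (hΦ : Measurable Φ) (m : ℕ) {τ t : ℝ} (hτ : 0 ≤ τ) (ht : 0 ≤ t) :
    (Measure.pi fun _ : Fin m => μ).real {S | ¬IsRepresentativeSample μ Φ τ t S} ≤
      4 ^ Fintype.card α * exp (-2 * m * τ ^ 2) + 2 * exp (-2 * m * t ^ 2) := by
  have hcover : {S : Fin m → Ω | ¬IsRepresentativeSample μ Φ τ t S} ⊆
      {S | ∃ A : Finset (α × Bool), τ < ∑ e ∈ id A, cellDeviation μ Φ S e} ∪
        {S | ∃ b : Bool, t < ∑ e with e.2 = b, cellDeviation μ Φ S e} := by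
    intro S hS
    simp only [IsRepresentativeSample, not_and_or, not_forall, not_le] at hS
    exact hS
  have hcard : (Fintype.card (Finset (α × Bool)) : ℝ) = 4 ^ Fintype.card α := by
    rw [Fintype.card_finset, Fintype.card_prod, Fintype.card_bool, pow_mul']
    norm_num
  calc _ ≤ _ := measureReal_mono hcover
    _ ≤ _ := measureReal_union_le _ _
    _ ≤ _ := add_le_add (measureReal_exists_lt_sum_cellDeviation_le μ hΦ id m hτ)
        (measureReal_exists_lt_sum_cellDeviation_le μ hΦ _ m ht)
    _ = _ := by rw [hcard, Fintype.card_bool, Nat.cast_ofNat]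

lemma ofReal_one_sub_le_measure_isRepresentativeSample [Nonempty α] (μ : Measure Ω)
    [IsProbabilityMeasure μ] {Φ : Ω → α × Bool} (hΦ : Measurable Φ) {m : ℕ} (hm : m ≠ 0)
    {δ : ℝ} (hδ : 0 < δ) (hδ1 : δ ≤ 1) :
    ENNReal.ofReal (1 - δ) ≤ (Measure.pi fun _ : Fin m => μ)
      {S | IsRepresentativeSample μ Φ
        ((√(2 * Fintype.card α) + √(log (2 / δ)) - 1 / 2) / √(2 * m))
        ((√(log (2 / δ)) + 1) / √(2 * m)) S} := by
  have hr := half_le_sqrt_log_two_div hδ hδ1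
  refine ofReal_one_sub_le_of_measureReal_compl_le ?_
  calc _ ≤ _ := measureReal_not_isRepresentativeSample_le μ hΦ m
        (div_nonneg (by linarith [sqrt_nonneg (2 * Fintype.card α : ℝ)]) (sqrt_nonneg _))
        (div_nonneg (by linarith) (sqrt_nonneg _))
    _ ≤ 2 * exp (-√(log (2 / δ)) ^ 2) := by
        rw [neg_two_mul_mul_div_sqrt_sq hm, neg_two_mul_mul_div_sqrt_sq hm]
        exact four_pow_mul_exp_add_two_mul_exp_le Fintype.card_pos hr
    _ = δ := two_mul_exp_neg_sqrt_log_sq hδ hδ1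

lemma IsRepresentativeSample.sum_cellDeviation_mul_le {μ : Measure Ω} [IsProbabilityMeasure μ]
    {Φ : Ω → α × Bool} (hΦ : Measurable Φ) {m : ℕ} (hm : m ≠ 0) {S : Fin m → Ω} {τ t : ℝ}
    (hS : IsRepresentativeSample μ Φ τ t S) {H : α × Bool → ℝ} {β : Bool → ℝ}
    (hβ : ∀ b, β b ∈ Set.Icc (0 : ℝ) 1) {c : ℝ} (hc0 : 0 ≤ c) (hc : ∀ e, |H e - β e.2| ≤ c) :
    ∑ e, cellDeviation μ Φ S e * H e ≤ 2 * c * τ + t := by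
  have h0 := sum_cellDeviation_univ (μ := μ) hΦ hm S
  calc ∑ e, cellDeviation μ Φ S e * H e
      ≤ c * ∑ e, |cellDeviation μ Φ S e| + ∑ e, cellDeviation μ Φ S e * β e.2 :=
        sum_mul_le_of_abs_sub_le _ hc
    _ ≤ c * (2 * τ) + t := add_le_add
        (mul_le_mul_of_nonneg_left (sum_abs_le_two_mul_of_sum_eq_zero h0 hS.1) hc0)
        (sum_mul_comp_snd_le h0 hβ hS.2)
    _ = 2 * c * τ + t := by ring

end RepresentativeSample

section Coloring

variable {X C : Type*}

def boolSign (b : Bool) : ℝ := if b then 1 else -1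

lemma boolSign_eq_neg_one_or_eq_one (b : Bool) : boolSign b = -1 ∨ boolSign b = 1 := by
  cases b <;> simp [boolSign]

lemma boolSign_decide_pos {y : ℝ} (hy : y = -1 ∨ y = 1) : boolSign (decide (0 < y)) = y := by
  rcases hy with rfl | rfl <;> norm_num [boolSign]

noncomputable def colorLabelCell (κ : X → C) (ω : X × ℝ) : C × Bool := (κ ω.1, decide (0 < ω.2))

lemma Function.FactorsThrough.exists_forall_mem_eq_comp {β : Type*} {f : X → β} {κ : X → C}
    (h : Function.FactorsThrough f κ) {s : Set β} (hf : ∀ x, f x ∈ s) {b : β} (hb : b ∈ s) :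
    ∃ g : C → β, (∀ c, g c ∈ s) ∧ ∀ x, f x = g (κ x) := by
  classical
  refine ⟨Function.extend κ f fun _ => b, fun c => ?_, fun x => (h.extend_apply _ x).symm⟩
  by_cases hc : ∃ x, κ x = c
  · obtain ⟨x, rfl⟩ := hc
    rw [h.extend_apply]
    exact hf x
  · rw [Function.extend_apply' _ _ _ hc]
    exact hb

lemma abs_sub_le_min_of_lipschitzOn {ℓ : ℝ → ℝ → ℝ} {γ : ℝ} (hγ : 0 ≤ γ)
    (hℓrange : ∀ u ∈ Set.Icc (-1 : ℝ) 1, ∀ y : ℝ, (y = -1 ∨ y = 1) → ℓ u y ∈ Set.Icc (0 : ℝ) 1)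
    (hℓlip : ∀ u ∈ Set.Icc (-1 : ℝ) 1, ∀ v ∈ Set.Icc (-1 : ℝ) 1,
      ∀ y : ℝ, (y = -1 ∨ y = 1) → |ℓ u y - ℓ v y| ≤ γ * |u - v|)
    {u : ℝ} (hu : u ∈ Set.Icc (-1 : ℝ) 1) {y : ℝ} (hy : y = -1 ∨ y = 1) :
    |ℓ u y - ℓ 0 y| ≤ min γ 1 := by
  have h0 : (0 : ℝ) ∈ Set.Icc (-1 : ℝ) 1 := by norm_num
  refine le_min ?_ ?_
  · calc |ℓ u y - ℓ 0 y| ≤ γ * |u - 0| := hℓlip u hu 0 h0 y hy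
      _ ≤ γ * 1 := by
          refine mul_le_mul_of_nonneg_left ?_ hγ
          rw [sub_zero, abs_le]
          exact hu
      _ = γ := mul_one γ
  · obtain ⟨hu₀, hu₁⟩ := hℓrange u hu y hy
    obtain ⟨h0₀, h0₁⟩ := hℓrange 0 h0 y hy
    rw [abs_le]
    constructor <;> linarith

variable [MeasurableSpace X]

lemma measurable_colorLabelCell [MeasurableSpace C] {κ : X → C} (hκ : Measurable κ) :
    Measurable (colorLabelCell κ) :=
  (hκ.comp measurable_fst).prodMk
    (measurable_to_bool (f := fun ω : X × ℝ => decide (0 < ω.2))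
      (by convert measurableSet_lt (measurable_const (a := (0 : ℝ))) measurable_snd; ext; simp))

lemma integral_sub_average_eq_sum_cellDeviation_colorLabelCell [Fintype C] [MeasurableSpace C]
    [MeasurableSingletonClass C] {D : Measure (X × ℝ)} [IsFiniteMeasure D]
    (hD : ∀ᵐ ω ∂D, ω.2 = -1 ∨ ω.2 = 1) {κ : X → C} (hκ : Measurable κ) (ℓ : ℝ → ℝ → ℝ)
    {f : X → ℝ} {g : C → ℝ} (hfg : ∀ x, f x = g (κ x)) {m : ℕ} {S : Fin m → X × ℝ}
    (hS : ∀ i, (S i).2 = -1 ∨ (S i).2 = 1) :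
    ∫ ω, ℓ (f ω.1) ω.2 ∂D - 1 / m * ∑ i, ℓ (f (S i).1) (S i).2 =
      ∑ e, cellDeviation D (colorLabelCell κ) S e * ℓ (g e.1) (boolSign e.2) := by
  have hcell : ∀ ω : X × ℝ, (ω.2 = -1 ∨ ω.2 = 1) → ℓ (f ω.1) ω.2 =
      ℓ (g (colorLabelCell κ ω).1) (boolSign (colorLabelCell κ ω).2) := fun ω hω => by
    rw [colorLabelCell, boolSign_decide_pos hω, hfg]
  rw [integral_congr_ae (hD.mono hcell), sum_congr rfl fun i _ => hcell (S i) (hS i)]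
  exact integral_sub_average_eq_sum_cellDeviation_mul (measurable_colorLabelCell hκ)
    (fun e => ℓ (g e.1) (boolSign e.2)) S

end Coloring

theorem generalization_bound_via_coloring_general
    (X : Type*) [MeasurableSpace X]
    (D : Measure (X × ℝ)) [IsProbabilityMeasure D]
    (hD : ∀ᵐ ω ∂D, ω.2 = -1 ∨ ω.2 = 1)
    (F : Set (X → ℝ))
    (hFbdd : ∀ f ∈ F, ∀ x, f x ∈ Set.Icc (-1 : ℝ) 1)
    (ℓ : ℝ → ℝ → ℝ) (γ : ℝ) (hγ : 0 ≤ γ)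
    (hℓrange : ∀ u ∈ Set.Icc (-1 : ℝ) 1, ∀ y : ℝ, (y = -1 ∨ y = 1) →
      ℓ u y ∈ Set.Icc (0 : ℝ) 1)
    (hℓlip : ∀ u ∈ Set.Icc (-1 : ℝ) 1, ∀ v ∈ Set.Icc (-1 : ℝ) 1,
      ∀ y : ℝ, (y = -1 ∨ y = 1) → |ℓ u y - ℓ v y| ≤ γ * |u - v|)
    (p : ℕ) (hp : 1 ≤ p) (κ : X → Fin p) (hκ : Measurable κ)
    (hresp : ∀ f ∈ F, ∀ x x' : X, κ x = κ x' → f x = f x')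
    (m : ℕ) (hm : 1 ≤ m) (δ : ℝ) (hδ : 0 < δ) :
    ENNReal.ofReal (1 - δ) ≤
      (Measure.pi fun _ : Fin m => D)
        {S : Fin m → X × ℝ | ∀ f ∈ F,
          (∫ ω, ℓ (f ω.1) ω.2 ∂D) ≤
            (1 / (m : ℝ)) * ∑ i, ℓ (f (S i).1) (S i).2 +
              2 * γ * Real.sqrt ((p : ℝ) / m) +
              3 * Real.sqrt (Real.log (2 / δ) / (2 * m))} := by
  rcases le_or_gt 1 δ with hδ1 | hδ1
  · simp [ENNReal.ofReal_of_nonpos (sub_nonpos.2 hδ1)]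
  have : Nonempty (Fin p) := ⟨⟨0, hp⟩⟩
  have hm0 : m ≠ 0 := by omega
  have hgood := ofReal_one_sub_le_measure_isRepresentativeSample D (measurable_colorLabelCell hκ)
    hm0 hδ hδ1.le
  simp only [Fintype.card_fin] at hgood
  have hlabels : ∀ᵐ S ∂(Measure.pi fun _ : Fin m => D), ∀ i, (S i).2 = -1 ∨ (S i).2 = 1 :=
    ae_all_iff.2 fun i => (Measure.quasiMeasurePreserving_eval (fun _ : Fin m => D) i).ae hD
  refine hgood.trans ((measure_inter_conull (ae_iff.1 hlabels)).symm.trans_le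
    (measure_mono fun S ⟨hS, hSlabels⟩ f hf => ?_))
  obtain ⟨g, hg, hfg⟩ := Function.FactorsThrough.exists_forall_mem_eq_comp
    (fun x x' => hresp f hf x x') (hFbdd f hf) (by norm_num : (0 : ℝ) ∈ Set.Icc (-1) 1)
  have hgap := integral_sub_average_eq_sum_cellDeviation_colorLabelCell hD hκ ℓ hfg hSlabels
  have hsum := hS.sum_cellDeviation_mul_le (measurable_colorLabelCell hκ) hm0
    (fun b => hℓrange 0 (by norm_num) _ (boolSign_eq_neg_one_or_eq_one b))
    (le_min hγ zero_le_one)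
    (fun e => abs_sub_le_min_of_lipschitzOn hγ hℓrange hℓlip (hg e.1)
      (boolSign_eq_neg_one_or_eq_one e.2))
  have harith := two_mul_min_mul_add_le γ p m (half_le_sqrt_log_two_div hδ hδ1.le)
  rw [← sqrt_div' _ (by positivity)] at harith
  linarith

theorem generalization_bound_via_coloring
    (X : Type*) [MeasurableSpace X]
    (D : Measure (X × ℝ)) [IsProbabilityMeasure D]
    (hD : ∀ᵐ ω ∂D, ω.2 = -1 ∨ ω.2 = 1)
    (F : Set (X → ℝ)) (hFne : F.Nonempty) (hFc : F.Countable)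
    (hFmeas : ∀ f ∈ F, Measurable f)
    (hFbdd : ∀ f ∈ F, ∀ x, f x ∈ Set.Icc (-1 : ℝ) 1)
    (ℓ : ℝ → ℝ → ℝ) (γ : ℝ) (hγ : 0 ≤ γ)
    (hℓrange : ∀ u ∈ Set.Icc (-1 : ℝ) 1, ∀ y : ℝ, (y = -1 ∨ y = 1) →
      ℓ u y ∈ Set.Icc (0 : ℝ) 1)
    (hℓlip : ∀ u ∈ Set.Icc (-1 : ℝ) 1, ∀ v ∈ Set.Icc (-1 : ℝ) 1,
      ∀ y : ℝ, (y = -1 ∨ y = 1) → |ℓ u y - ℓ v y| ≤ γ * |u - v|)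
    (p : ℕ) (hp : 1 ≤ p) (κ : X → Fin p) (hκ : Measurable κ)
    (hresp : ∀ f ∈ F, ∀ x x' : X, κ x = κ x' → f x = f x')
    (m : ℕ) (hm : 1 ≤ m) (δ : ℝ) (hδ : 0 < δ) :
    ENNReal.ofReal (1 - δ) ≤
      (Measure.pi fun _ : Fin m => D)
        {S : Fin m → X × ℝ | ∀ f ∈ F,
          (∫ ω, ℓ (f ω.1) ω.2 ∂D) ≤
            (1 / (m : ℝ)) * ∑ i, ℓ (f (S i).1) (S i).2 +
              2 * γ * Real.sqrt ((p : ℝ) / m) +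
              3 * Real.sqrt (Real.log (2 / δ) / (2 * m))} :=
  generalization_bound_via_coloring_general X D hD F hFbdd ℓ γ hγ hℓrange hℓlip p hp κ hκ hresp m hm
    δ hδ
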